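/- arXiv:2208.02228 — 2 statements merged into one kernel-verified Lean document; each statement's English description precedes it below -/
import Mathlib

section
/- Let G be a simple graph with no cycle of length 3 and no cycle of length 5, and let v and w be nonadjacent vertices of G with at least two distinct common neighbors. Then the graph obtained from G by identifying v and w contains no cycle of length 3. -/
open SimpleGraph

/-- A plane (embedded) graph on vertex set `V`: a simple graph together with a
finite set of faces, each given by its (cyclic) boundary walk, a designated
outer face, such that consecutive vertices on a boundary walk are adjacent,
every edge lies on exactly two face incidences (counted with multiplicity),
and Euler's formula holds when the graph is connected. -/
structure PlaneGraph (V : Type) [Fintype V] [DecidableEq V] where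
  graph : SimpleGraph V
  Face : Type
  fintypeFace : Fintype Face
  boundary : Face → List V
  outer : Face
  boundary_adj : ∀ f : Face, ∀ p ∈ (boundary f).zip ((boundary f).rotate 1), graph.Adj p.1 p.2
  edge_twice : ∀ e ∈ graph.edgeSet,
    ((@Finset.univ Face fintypeFace).sum fun f =>
      (((boundary f).zip ((boundary f).rotate 1)).map fun p => s(p.1, p.2)).count e) = 2
  euler : graph.Connected →
    Fintype.card V + @Fintype.card Face fintypeFace = Nat.card graph.edgeSet + 2

namespace PlaneGraph

variable {V : Type} [Fintype V] [DecidableEq V]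

instance (P : PlaneGraph V) : Fintype P.Face := P.fintypeFace

/-- The degree of a vertex. -/
noncomputable def deg (P : PlaneGraph V) (v : V) : ℕ := Nat.card {u : V // P.graph.Adj v u}

/-- The length of (the boundary walk of) a face. -/
def faceLen (P : PlaneGraph V) (f : P.Face) : ℕ := (P.boundary f).length

/-- A vertex is incident with a face if it lies on its boundary walk. -/
def VertexOnFace (P : PlaneGraph V) (v : V) (f : P.Face) : Prop := v ∈ P.boundary f

/-- An edge `ab` is incident with a face if `a` and `b` appear consecutively
(cyclically) on its boundary walk. -/
def EdgeOnFace (P : PlaneGraph V) (a b : V) (f : P.Face) : Prop :=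
  (a, b) ∈ (P.boundary f).zip ((P.boundary f).rotate 1) ∨
  (b, a) ∈ (P.boundary f).zip ((P.boundary f).rotate 1)

/-- Level-1 vertices (relative to the designated set `T`): vertices not in `T`
of degree at most 3. -/
def Level1 (P : PlaneGraph V) (T : Set V) (v : V) : Prop := v ∉ T ∧ P.deg v ≤ 3

/-- Vertices of level at most 2 (relative to `T`): vertices not in `T` having at
most 3 neighbors outside `V₁` (this contains `V₁` itself). -/
noncomputable def LevelLe2 (P : PlaneGraph V) (T : Set V) (v : V) : Prop :=
  v ∉ T ∧ Nat.card {u : V // P.graph.Adj v u ∧ ¬ P.Level1 T u} ≤ 3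

/-- `w` is a good neighbor of `v`: `w` is a neighbor of `v` of level at most 2
such that the face incident with `v` but not with the edge `vw` is a 4-face. -/
def GoodNbr (P : PlaneGraph V) (T : Set V) (v w : V) : Prop :=
  P.graph.Adj v w ∧ P.LevelLe2 T w ∧
  ∃ f : P.Face, P.VertexOnFace v f ∧ ¬ P.EdgeOnFace v w f ∧ P.faceLen f = 4

/-- A good vertex: a 3-vertex incident with three distinct faces having a good
neighbor. -/
def Good (P : PlaneGraph V) (T : Set V) (v : V) : Prop :=
  P.deg v = 3 ∧
  (∃ f1 f2 f3 : P.Face, f1 ≠ f2 ∧ f1 ≠ f3 ∧ f2 ≠ f3 ∧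
    P.VertexOnFace v f1 ∧ P.VertexOnFace v f2 ∧ P.VertexOnFace v f3) ∧
  ∃ w : V, P.GoodNbr T v w

end PlaneGraph

/-- `G` has no cycle of length `k`. -/
def NoCycleLen {V : Type} (G : SimpleGraph V) (k : ℕ) : Prop :=
  ∀ (v : V) (c : G.Walk v v), c.IsCycle → c.length ≠ k

/-- `G` has no separating cycle of length `k`: deleting the vertices of any
`k`-cycle leaves a (pre)connected graph. -/
def NoSepCycleLen {V : Type} (G : SimpleGraph V) (k : ℕ) : Prop :=
  ∀ (v : V) (c : G.Walk v v), c.IsCycle → c.length = k →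
    (G.induce {x | x ∉ c.support}).Preconnected

/-- A proper `k`-coloring of `G`. -/
def IsProperColoring {V : Type} (G : SimpleGraph V) (k : ℕ) (φ : V → Fin k) : Prop :=
  ∀ a b : V, G.Adj a b → φ a ≠ φ b

/-- The graph obtained from `G` by identifying the two (nonadjacent) vertices
`v` and `w`: on the vertex set `V ∖ {w}`, the vertex `v` plays the role of the
identified vertex `v*w`, adjacent to all former neighbors of `v` or of `w`. -/
def Identify {V : Type} (G : SimpleGraph V) (v w : V) : SimpleGraph {x : V // x ≠ w} where
  Adj a b := (G.Adj a.1 b.1 ∨ (a.1 = v ∧ G.Adj w b.1) ∨ (b.1 = v ∧ G.Adj w a.1)) ∧ a ≠ b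
  symm := ⟨by
    rintro a b ⟨h, hne⟩
    refine ⟨?_, Ne.symm hne⟩
    rcases h with h | ⟨h1, h2⟩ | ⟨h1, h2⟩
    · exact Or.inl h.symm
    · exact Or.inr (Or.inr ⟨h1, h2⟩)
    · exact Or.inr (Or.inl ⟨h1, h2⟩)⟩
  loopless := ⟨fun a h => h.2 rfl⟩

/-- One recoloring step: two colorings differing on exactly one vertex. -/
def RecolorStep {V : Type} {k : ℕ} (φ ψ : V → Fin k) : Prop := ∃! x : V, φ x ≠ ψ x

/-- A valid recoloring sequence for `G`: a list of proper `k`-colorings in which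
consecutive colorings differ on exactly one vertex. -/
def RecolorSeq {V : Type} (G : SimpleGraph V) (k : ℕ) (L : List (V → Fin k)) : Prop :=
  (∀ φ ∈ L, IsProperColoring G k φ) ∧ L.Chain' RecolorStep

/-- The number of times the vertex `x` gets recolored along the sequence `L`. -/
def recolorCount {V : Type} {k : ℕ} (L : List (V → Fin k)) (x : V) : ℕ :=
  (L.zip L.tail).countP fun p => decide (p.1 x ≠ p.2 x)

/-- The reconfiguration graph `C_k(G)`: vertices are the proper `k`-colorings of
`G`, two colorings being adjacent when they differ on exactly one vertex. -/
def ReconfGraph {V : Type} (G : SimpleGraph V) (k : ℕ) :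
    SimpleGraph {φ : V → Fin k // IsProperColoring G k φ} where
  Adj φ ψ := ∃! x : V, φ.1 x ≠ ψ.1 x
  symm := ⟨by
    rintro φ ψ ⟨x, hx, hu⟩
    exact ⟨x, Ne.symm hx, fun y hy => hu y (Ne.symm hy)⟩⟩
  loopless := ⟨fun φ ⟨x, hx, _⟩ => hx rfl⟩


lemma tri {V : Type} {G : SimpleGraph V}
    (h3 : ∀ (u : V) (c : G.Walk u u), c.IsCycle → c.length ≠ 3)
    {a b c : V} (hab : G.Adj a b) (hbc : G.Adj b c) (hca : G.Adj c a) : False := by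
  refine h3 a (Walk.cons hab (Walk.cons hbc (Walk.cons hca Walk.nil))) ?_ rfl
  have h1 := hab.ne; have h2 := hbc.ne; have h3' := hca.ne
  rw [Walk.isCycle_def, Walk.isTrail_def]
  refine ⟨?_, by simp, ?_⟩ <;> simp_all [Sym2.eq_iff, Ne.symm] <;> tauto

lemma pent {V : Type} {G : SimpleGraph V}
    (h5 : ∀ (u : V) (c : G.Walk u u), c.IsCycle → c.length ≠ 5)
    {a b c d e : V} (hab : G.Adj a b) (hbc : G.Adj b c) (hcd : G.Adj c d)
    (hde : G.Adj d e) (hea : G.Adj e a)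
    (hac : a ≠ c) (had : a ≠ d) (hbd : b ≠ d) (hbe : b ≠ e) (hce : c ≠ e) : False := by
  refine h5 a (Walk.cons hab (Walk.cons hbc (Walk.cons hcd (Walk.cons hde (Walk.cons hea Walk.nil))))) ?_ rfl
  have := hab.ne; have := hbc.ne; have := hcd.ne; have := hde.ne; have := hea.ne
  rw [Walk.isCycle_def, Walk.isTrail_def]
  refine ⟨?_, by simp, ?_⟩ <;> simp_all [Sym2.eq_iff, Ne.symm] <;> tauto

lemma hub {V : Type} {G : SimpleGraph V}
    (h3 : ∀ (u : V) (c : G.Walk u u), c.IsCycle → c.length ≠ 3)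
    (h5 : ∀ (u : V) (c : G.Walk u u), c.IsCycle → c.length ≠ 5)
    {v w x : V} (hvw : v ≠ w) (hx : G.Adj v x ∧ G.Adj w x)
    {b d : V} (hbw : b ≠ w) (hdw : d ≠ w) (hbv : b ≠ v) (hdv : d ≠ v) (hbd : b ≠ d)
    (h1 : G.Adj v b ∨ G.Adj w b) (h2 : G.Adj b d) (h4 : G.Adj v d ∨ G.Adj w d) : False := by
  rcases h1 with h1 | h1 <;> rcases h4 with h4 | h4
  · exact tri h3 h1 h2 h4.symm
  · -- Adj v b, Adj w d
    rcases eq_or_ne x b with rfl | hxb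
    · exact tri h3 hx.2 h2 h4.symm
    rcases eq_or_ne x d with rfl | hxd
    · exact tri h3 h1 h2 hx.1.symm
    · exact pent h5 h1 h2 h4.symm hx.2 hx.1.symm
        hdv.symm hvw hbw (Ne.symm hxb) (Ne.symm hxd)
  · -- Adj w b, Adj v d
    rcases eq_or_ne x b with rfl | hxb
    · exact tri h3 hx.1 h2 h4.symm
    rcases eq_or_ne x d with rfl | hxd
    · exact tri h3 h1 h2 hx.2.symm
    · exact pent h5 h4 h2.symm h1.symm hx.2 hx.1.symm
        hbv.symm hvw hdw (Ne.symm hxd) (Ne.symm hxb)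
  · exact tri h3 h1 h2 h4.symm

lemma key_identify {V : Type} {G : SimpleGraph V}
    (h3 : ∀ (u : V) (c : G.Walk u u), c.IsCycle → c.length ≠ 3)
    (h5 : ∀ (u : V) (c : G.Walk u u), c.IsCycle → c.length ≠ 5)
    {v w x : V} (hvw : v ≠ w) (hx : G.Adj v x ∧ G.Adj w x)
    {a b d : V} (haw : a ≠ w) (hbw : b ≠ w) (hdw : d ≠ w)
    (hab : a ≠ b) (hbd : b ≠ d) (hda : d ≠ a)
    (e1 : G.Adj a b ∨ (a = v ∧ G.Adj w b) ∨ (b = v ∧ G.Adj w a))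
    (e2 : G.Adj b d ∨ (b = v ∧ G.Adj w d) ∨ (d = v ∧ G.Adj w b))
    (e3 : G.Adj d a ∨ (d = v ∧ G.Adj w a) ∨ (a = v ∧ G.Adj w d)) : False := by
  rcases eq_or_ne a v with hav | hav
  · have hbv : b ≠ v := fun hb => hab (hav.trans hb.symm)
    have hdv : d ≠ v := fun hd => hda (hd.trans hav.symm)
    have E1 : G.Adj v b ∨ G.Adj w b := by
      rcases e1 with h | ⟨_, h⟩ | ⟨h, _⟩
      exacts [Or.inl (hav ▸ h), Or.inr h, absurd h hbv]
    have E3 : G.Adj v d ∨ G.Adj w d := by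
      rcases e3 with h | ⟨h, _⟩ | ⟨_, h⟩
      exacts [Or.inl (hav ▸ h.symm), absurd h hdv, Or.inr h]
    have E2 : G.Adj b d := by
      rcases e2 with h | ⟨h, _⟩ | ⟨h, _⟩
      exacts [h, absurd h hbv, absurd h hdv]
    exact hub h3 h5 hvw hx hbw hdw hbv hdv hbd E1 E2 E3
  rcases eq_or_ne b v with hbv | hbv
  · have hdv : d ≠ v := fun hd => hbd (hbv.trans hd.symm)
    have E1 : G.Adj v d ∨ G.Adj w d := by
      rcases e2 with h | ⟨_, h⟩ | ⟨h, _⟩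
      exacts [Or.inl (hbv ▸ h), Or.inr h, absurd h hdv]
    have E3 : G.Adj v a ∨ G.Adj w a := by
      rcases e1 with h | ⟨h, _⟩ | ⟨_, h⟩
      exacts [Or.inl (hbv ▸ h.symm), absurd h hav, Or.inr h]
    have E2 : G.Adj d a := by
      rcases e3 with h | ⟨h, _⟩ | ⟨h, _⟩
      exacts [h, absurd h hdv, absurd h hav]
    exact hub h3 h5 hvw hx hdw haw hdv hav hda E1 E2 E3
  rcases eq_or_ne d v with hdv | hdv
  · have E1 : G.Adj v a ∨ G.Adj w a := by
      rcases e3 with h | ⟨_, h⟩ | ⟨h, _⟩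
      exacts [Or.inl (hdv ▸ h), Or.inr h, absurd h hav]
    have E3 : G.Adj v b ∨ G.Adj w b := by
      rcases e2 with h | ⟨h, _⟩ | ⟨_, h⟩
      exacts [Or.inl (hdv ▸ h.symm), absurd h hbv, Or.inr h]
    have E2 : G.Adj a b := by
      rcases e1 with h | ⟨h, _⟩ | ⟨h, _⟩
      exacts [h, absurd h hav, absurd h hbv]
    exact hub h3 h5 hvw hx haw hbw hav hbv hab E1 E2 E3
  · have E1 : G.Adj a b := by
      rcases e1 with h | ⟨h, _⟩ | ⟨h, _⟩
      exacts [h, absurd h hav, absurd h hbv]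
    have E2 : G.Adj b d := by
      rcases e2 with h | ⟨h, _⟩ | ⟨h, _⟩
      exacts [h, absurd h hbv, absurd h hdv]
    have E3 : G.Adj d a := by
      rcases e3 with h | ⟨h, _⟩ | ⟨h, _⟩
      exacts [h, absurd h hdv, absurd h hav]
    exact tri h3 E1 E2 E3

/-- If `G` has no 3-cycle and no 5-cycle, and `v`, `w` are
nonadjacent vertices with at least two distinct common neighbors, then the
graph obtained from `G` by identifying `v` and `w` has no 3-cycle. -/
theorem identify_no_triangle {V : Type} (G : SimpleGraph V)
    (h3 : NoCycleLen G 3) (h5 : NoCycleLen G 5)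
    (v w : V) (hvw : v ≠ w) (hnadj : ¬ G.Adj v w)
    (x y : V) (hxy : x ≠ y)
    (hx : G.Adj v x ∧ G.Adj w x) (hy : G.Adj v y ∧ G.Adj w y) :
    NoCycleLen (Identify G v w) 3 := by
  intro a c hc hl
  cases c with
  | nil => simp at hl
  | cons h1 p =>
    cases p with
    | nil => simp at hl
    | cons h2 q =>
      cases q with
      | nil => simp at hl
      | cons h3' r =>
        cases r with
        | cons h4 s => simp [SimpleGraph.Walk.length_cons] at hl
        | nil =>
          rename_i b d
          rw [SimpleGraph.Walk.isCycle_def] at hc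
          have hnd := hc.2.2
          simp at hnd
          obtain ⟨⟨hbd, hba⟩, hda⟩ := hnd
          obtain ⟨e1, -⟩ := h1
          obtain ⟨e2, -⟩ := h2
          obtain ⟨e3, -⟩ := h3'
          exact key_identify h3 h5 hvw hx a.2 b.2 d.2
            (fun h => hba (Subtype.ext h).symm) (fun h => hbd (Subtype.ext h))
            (fun h => hda (Subtype.ext h)) e1 e2 e3
end

section
/- Let G be a graph, let v be a vertex of G with degree at most 2, and let φA and φB be proper 5-colorings of G. Suppose the restrictions of φA and φB to G − v can be transformed into one another by a sequence of single-vertex recolorings, through proper 5-colorings of G − v, in which each vertex is recolored at most t times. Then φA can be transformed into φB by a sequence of single-vertex recolorings, through proper 5-colorings of G, in which each vertex of G − v is recolored at most t times and v is recolored at most t + 1 times. -/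
open SimpleGraph

section Aux

variable {V : Type} [Fintype V] [DecidableEq V]

/-- neighbors of `v` as a finset of the subtype -/
noncomputable def NBv (G : SimpleGraph V) (v : V) : Finset {x : V // x ≠ v} := by
  classical exact Finset.univ.filter (fun u => G.Adj v u.1)

def extc (v : V) (ψ : {x : V // x ≠ v} → Fin 5) (c : Fin 5) : V → Fin 5 :=
  fun x => if h : x = v then c else ψ ⟨x, h⟩

def validc (G : SimpleGraph V) (v : V) (c : Fin 5) (ψ : {x : V // x ≠ v} → Fin 5) : Prop :=
  ∀ u ∈ NBv G v, ψ u ≠ c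

open Classical in
noncomputable def tgt (G : SimpleGraph V) (v : V) : List ({x : V // x ≠ v} → Fin 5) → Finset (Fin 5)
  | [] => ∅
  | [_] => ∅
  | ψ0 :: ψ1 :: r =>
    if ∀ u ∈ NBv G v, ψ0 u = ψ1 u then tgt G v (ψ1 :: r) else (NBv G v).image ψ1

def safe1 (G : SimpleGraph V) (v : V) (c : Fin 5) (l : List ({x : V // x ≠ v} → Fin 5)) : Prop :=
  c ∉ tgt G v l

open Classical in
noncomputable def evCount (G : SimpleGraph V) (v : V) : List ({x : V // x ≠ v} → Fin 5) → ℕ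
  | [] => 0
  | [_] => 0
  | ψ0 :: ψ1 :: r =>
    (if ∀ u ∈ NBv G v, ψ0 u = ψ1 u then 0 else 1) + evCount G v (ψ1 :: r)

open Classical in
noncomputable def chooseColor (G : SimpleGraph V) (v : V) (ψ0 ψ1 : {x : V // x ≠ v} → Fin 5)
    (r : List ({x : V // x ≠ v} → Fin 5)) : Fin 5 :=
  if h : ∃ c, validc G v c ψ0 ∧ validc G v c ψ1 ∧ safe1 G v c (ψ1 :: r) then h.choose else 0

open Classical in
noncomputable def liftFrom (G : SimpleGraph V) (v : V) (c : Fin 5) :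
    List ({x : V // x ≠ v} → Fin 5) → List (V → Fin 5)
  | [] => []
  | [ψ] => [extc v ψ c]
  | ψ0 :: ψ1 :: r =>
    if validc G v c ψ1 then extc v ψ0 c :: liftFrom G v c (ψ1 :: r)
    else extc v ψ0 c :: extc v ψ0 (chooseColor G v ψ0 ψ1 r) ::
      liftFrom G v (chooseColor G v ψ0 ψ1 r) (ψ1 :: r)

end Aux

section Lemmas

variable {V : Type} [Fintype V] [DecidableEq V] {G : SimpleGraph V} {v : V}

lemma card_NBv (hdeg : Nat.card {u : V // G.Adj v u} ≤ 2) : (NBv G v).card ≤ 2 := by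
  classical
  have : Nat.card {u : V // G.Adj v u} = Fintype.card {u : V // G.Adj v u} :=
    Nat.card_eq_fintype_card
  rw [this, Fintype.card_subtype] at hdeg
  refine le_trans ?_ hdeg
  apply Finset.card_le_card_of_injOn (fun u => u.1)
  · intro u hu
    simp only [NBv, Finset.mem_filter] at hu ⊢
    simpa using hu
  · intro a _ b _ hab
    exact Subtype.ext hab

@[simp] lemma extc_v (ψ : {x : V // x ≠ v} → Fin 5) (c : Fin 5) : extc v ψ c v = c := by
  simp [extc]

lemma extc_ne (ψ : {x : V // x ≠ v} → Fin 5) (c : Fin 5) (x : {x : V // x ≠ v}) :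
    extc v ψ c x.1 = ψ x := by
  simp [extc, x.2]

lemma extc_restrict (φ : V → Fin 5) : extc v (fun x => φ x.1) (φ v) = φ := by
  funext x
  by_cases h : x = v <;> simp [extc, h]

@[simp] lemma recolorCount_nil {k : ℕ} (x : V) : recolorCount ([] : List (V → Fin k)) x = 0 := rfl

@[simp] lemma recolorCount_single {k : ℕ} (ψ : V → Fin k) (x : V) :
    recolorCount [ψ] x = 0 := rfl

lemma recolorCount_cons_cons {k : ℕ} (a b : V → Fin k) (l : List (V → Fin k)) (x : V) :
    recolorCount (a :: b :: l) x =
      (if a x ≠ b x then 1 else 0) + recolorCount (b :: l) x := by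
  simp only [recolorCount, List.tail_cons, List.zip_cons_cons, List.countP_cons]
  by_cases h : a x = b x <;> simp [h] <;> omega

end Lemmas

section Lemmas2
set_option linter.unusedSectionVars false

variable {V : Type} [Fintype V] [DecidableEq V] {G : SimpleGraph V} {v : V}

lemma image_step {ψ0 ψ1 : {x : V // x ≠ v} → Fin 5} (h : RecolorStep ψ0 ψ1) :
    ∃ x : Fin 5, (NBv G v).image ψ1 ⊆ (NBv G v).image ψ0 ∪ {x} := by
  obtain ⟨z, hz, huniq⟩ := h
  refine ⟨ψ1 z, fun c hc => ?_⟩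
  simp only [Finset.mem_image] at hc
  obtain ⟨u, hu, rfl⟩ := hc
  by_cases h : ψ0 u = ψ1 u
  · exact Finset.mem_union_left _ (Finset.mem_image.2 ⟨u, hu, h⟩)
  · have := huniq u h
    subst this
    simp

lemma tgt_subset : ∀ (r : List ({x : V // x ≠ v} → Fin 5)) (ψ : {x : V // x ≠ v} → Fin 5),
    (ψ :: r).Chain' RecolorStep →
    ∃ x : Fin 5, tgt G v (ψ :: r) ⊆ (NBv G v).image ψ ∪ {x} := by
  intro r
  induction r with
  | nil => intro ψ _; exact ⟨0, by simp [tgt]⟩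
  | cons ψ1 rest ih =>
    intro ψ hch
    rw [List.Chain', List.isChain_cons_cons] at hch
    by_cases h : ∀ u ∈ NBv G v, ψ u = ψ1 u
    · obtain ⟨x, hx⟩ := ih ψ1 hch.2
      refine ⟨x, ?_⟩
      rw [tgt, if_pos h]
      have himg : (NBv G v).image ψ1 = (NBv G v).image ψ :=
        Finset.image_congr (fun u hu => (h u hu).symm)
      rwa [himg] at hx
    · obtain ⟨x, hx⟩ := image_step (G := G) (v := v) hch.1
      refine ⟨x, ?_⟩
      rw [tgt, if_neg h]
      exact hx

lemma chooseColor_spec (hdeg : Nat.card {u : V // G.Adj v u} ≤ 2)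
    {ψ0 ψ1 : {x : V // x ≠ v} → Fin 5} {r : List ({x : V // x ≠ v} → Fin 5)}
    (hch : (ψ0 :: ψ1 :: r).Chain' RecolorStep) :
    validc G v (chooseColor G v ψ0 ψ1 r) ψ0 ∧ validc G v (chooseColor G v ψ0 ψ1 r) ψ1 ∧
      safe1 G v (chooseColor G v ψ0 ψ1 r) (ψ1 :: r) := by
  classical
  rw [List.Chain', List.isChain_cons_cons] at hch
  have hNB := card_NBv (G := G) (v := v) hdeg
  obtain ⟨x1, hx1⟩ := image_step (G := G) (v := v) hch.1
  obtain ⟨x2, hx2⟩ := tgt_subset (G := G) (v := v) r ψ1 hch.2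
  set F : Finset (Fin 5) :=
    (NBv G v).image ψ0 ∪ {x1} ∪ {x2} with hF
  have hcard : F.card ≤ 4 := by
    calc F.card ≤ ((NBv G v).image ψ0).card + ({x1} : Finset (Fin 5)).card
        + ({x2} : Finset (Fin 5)).card := by
          refine le_trans (Finset.card_union_le _ _) ?_
          exact Nat.add_le_add_right (Finset.card_union_le _ _) _
      _ ≤ 2 + 1 + 1 := by
          have := Finset.card_image_le (s := NBv G v) (f := ψ0)
          simp only [Finset.card_singleton]
          omega
      _ = 4 := rfl
  have hex : ∃ c : Fin 5, c ∉ F := by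
    by_contra hcon
    push_neg at hcon
    have : (Finset.univ : Finset (Fin 5)) ⊆ F := fun c _ => hcon c
    have := Finset.card_le_card this
    simp at this
    omega
  obtain ⟨c, hc⟩ := hex
  have hsub1 : (NBv G v).image ψ1 ⊆ F := by
    intro a ha
    rcases Finset.mem_union.1 (hx1 ha) with h | h
    · exact Finset.mem_union_left _ (Finset.mem_union_left _ h)
    · exact Finset.mem_union_left _ (Finset.mem_union_right _ h)
  have hsub2 : tgt G v (ψ1 :: r) ⊆ F := by
    intro a ha
    rcases Finset.mem_union.1 (hx2 ha) with h | h
    · exact hsub1 h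
    · exact Finset.mem_union_right _ h
  have hprops : validc G v c ψ0 ∧ validc G v c ψ1 ∧ safe1 G v c (ψ1 :: r) := by
    refine ⟨fun u hu he => hc ?_, fun u hu he => hc ?_, fun ht => hc (hsub2 ht)⟩
    · exact Finset.mem_union_left _ (Finset.mem_union_left _
        (Finset.mem_image.2 ⟨u, hu, he⟩))
    · exact hsub1 (Finset.mem_image.2 ⟨u, hu, he⟩)
  have hexists : ∃ c, validc G v c ψ0 ∧ validc G v c ψ1 ∧ safe1 G v c (ψ1 :: r) :=
    ⟨c, hprops⟩
  rw [chooseColor, dif_pos hexists]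
  exact hexists.choose_spec

end Lemmas2

section Lemmas3
set_option linter.unusedSectionVars false

variable {V : Type} [Fintype V] [DecidableEq V] {G : SimpleGraph V} {v : V}

lemma liftFrom_cons (c : Fin 5) (ψ : {x : V // x ≠ v} → Fin 5)
    (r : List ({x : V // x ≠ v} → Fin 5)) :
    ∃ tl, liftFrom G v c (ψ :: r) = extc v ψ c :: tl := by
  classical
  cases r with
  | nil => exact ⟨[], rfl⟩
  | cons ψ1 rest =>
    by_cases h : validc G v c ψ1
    · exact ⟨_, by rw [liftFrom, if_pos h]⟩
    · exact ⟨_, by rw [liftFrom, if_neg h]⟩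

lemma extc_proper {ψ : {x : V // x ≠ v} → Fin 5} {c : Fin 5}
    (hψ : IsProperColoring (G.induce {x : V | x ≠ v}) 5 ψ)
    (hc : validc G v c ψ) : IsProperColoring G 5 (extc v ψ c) := by
  intro a b hab
  by_cases ha : a = v
  · rw [ha] at hab ⊢
    have hb : b ≠ v := hab.ne'
    rw [extc_v, extc_ne (x := ⟨b, hb⟩)]
    have : (⟨b, hb⟩ : {x : V // x ≠ v}) ∈ NBv G v := by
      simp [NBv, hab]
    exact (hc _ this).symm
  · by_cases hb : b = v
    · rw [hb] at hab ⊢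
      rw [extc_v, extc_ne (x := ⟨a, ha⟩)]
      have : (⟨a, ha⟩ : {x : V // x ≠ v}) ∈ NBv G v := by
        simp [NBv, hab.symm]
      exact hc _ this
    · rw [extc_ne (x := ⟨a, ha⟩), extc_ne (x := ⟨b, hb⟩)]
      exact hψ ⟨a, ha⟩ ⟨b, hb⟩ (by simpa using hab)

lemma liftFrom_proper (hdeg : Nat.card {u : V // G.Adj v u} ≤ 2) :
    ∀ (r : List ({x : V // x ≠ v} → Fin 5)) (ψ0 : {x : V // x ≠ v} → Fin 5) (c : Fin 5),
    (ψ0 :: r).Chain' RecolorStep →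
    (∀ ψ ∈ ψ0 :: r, IsProperColoring (G.induce {x : V | x ≠ v}) 5 ψ) →
    validc G v c ψ0 →
    ∀ φ ∈ liftFrom G v c (ψ0 :: r), IsProperColoring G 5 φ := by
  classical
  intro r
  induction r with
  | nil =>
    intro ψ0 c _ hall hc φ hφ
    rw [liftFrom] at hφ
    simp only [List.mem_singleton] at hφ
    subst hφ
    exact extc_proper (hall ψ0 (by simp)) hc
  | cons ψ1 rest ih =>
    intro ψ0 c hch hall hc φ hφ
    have hch' : (ψ1 :: rest).Chain' RecolorStep := (List.isChain_cons_cons.1 hch).2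
    have hall' : ∀ ψ ∈ ψ1 :: rest, IsProperColoring (G.induce {x : V | x ≠ v}) 5 ψ :=
      fun ψ hψ => hall ψ (List.mem_cons_of_mem _ hψ)
    by_cases h : validc G v c ψ1
    · rw [liftFrom, if_pos h] at hφ
      rcases List.mem_cons.1 hφ with rfl | hφ
      · exact extc_proper (hall ψ0 (by simp)) hc
      · exact ih ψ1 c hch' hall' h φ hφ
    · rw [liftFrom, if_neg h] at hφ
      obtain ⟨hc0, hc1, _⟩ := chooseColor_spec hdeg hch
      rcases List.mem_cons.1 hφ with rfl | hφ
      · exact extc_proper (hall ψ0 (by simp)) hc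
      · rcases List.mem_cons.1 hφ with rfl | hφ
        · exact extc_proper (hall ψ0 (by simp)) hc0
        · exact ih ψ1 _ hch' hall' hc1 φ hφ

lemma recolorStep_lift {ψ0 ψ1 : {x : V // x ≠ v} → Fin 5} (c : Fin 5)
    (h : RecolorStep ψ0 ψ1) : RecolorStep (extc v ψ0 c) (extc v ψ1 c) := by
  obtain ⟨z, hz, huniq⟩ := h
  refine ⟨z.1, ?_, ?_⟩
  · show extc v ψ0 c z.1 ≠ extc v ψ1 c z.1
    rw [extc_ne, extc_ne]; exact hz
  · intro y hy
    have hyv : y ≠ v := by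
      intro he; subst he; simp at hy
    rw [extc_ne (x := ⟨y, hyv⟩), extc_ne (x := ⟨y, hyv⟩)] at hy
    exact congrArg Subtype.val (huniq ⟨y, hyv⟩ hy)

lemma recolorStep_v {ψ : {x : V // x ≠ v} → Fin 5} {c c' : Fin 5} (h : c ≠ c') :
    RecolorStep (extc v ψ c) (extc v ψ c') := by
  refine ⟨v, by simpa using h, ?_⟩
  intro y hy
  by_contra hyv
  rw [extc_ne (x := ⟨y, hyv⟩), extc_ne (x := ⟨y, hyv⟩)] at hy
  exact hy rfl

lemma liftFrom_chain (hdeg : Nat.card {u : V // G.Adj v u} ≤ 2) :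
    ∀ (r : List ({x : V // x ≠ v} → Fin 5)) (ψ0 : {x : V // x ≠ v} → Fin 5) (c : Fin 5),
    (ψ0 :: r).Chain' RecolorStep →
    validc G v c ψ0 →
    (liftFrom G v c (ψ0 :: r)).Chain' RecolorStep := by
  classical
  intro r
  induction r with
  | nil => intro ψ0 c _ _; rw [liftFrom]; exact List.isChain_singleton _
  | cons ψ1 rest ih =>
    intro ψ0 c hch hc
    rw [List.Chain', List.isChain_cons_cons] at hch
    by_cases h : validc G v c ψ1
    · rw [liftFrom, if_pos h]
      obtain ⟨tl, htl⟩ := liftFrom_cons (G := G) c ψ1 rest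
      rw [htl]
      rw [List.Chain', List.isChain_cons_cons]
      constructor
      · exact recolorStep_lift c hch.1
      · rw [← htl]; exact ih ψ1 c hch.2 h
    · rw [liftFrom, if_neg h]
      obtain ⟨hc0, hc1, _⟩ := chooseColor_spec hdeg (List.isChain_cons_cons.2 hch)
      set c' := chooseColor G v ψ0 ψ1 rest with hc'
      have hcc' : c ≠ c' := by
        intro he; rw [← he] at hc1; exact h hc1
      obtain ⟨tl, htl⟩ := liftFrom_cons (G := G) c' ψ1 rest
      rw [htl, List.Chain', List.isChain_cons_cons, List.isChain_cons_cons]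
      refine ⟨recolorStep_v hcc', recolorStep_lift c' hch.1, ?_⟩
      rw [← htl]; exact ih ψ1 c' hch.2 hc1

end Lemmas3

section Lemmas4
set_option linter.unusedSectionVars false

variable {V : Type} [Fintype V] [DecidableEq V] {G : SimpleGraph V} {v : V}

lemma liftFrom_getLast :
    ∀ (r : List ({x : V // x ≠ v} → Fin 5)) (ψ0 : {x : V // x ≠ v} → Fin 5) (c : Fin 5)
    (ψl : {x : V // x ≠ v} → Fin 5), (ψ0 :: r).getLast? = some ψl →
    ∃ c', (liftFrom G v c (ψ0 :: r)).getLast? = some (extc v ψl c') := by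
  classical
  intro r
  induction r with
  | nil =>
    intro ψ0 c ψl hl
    simp only [List.getLast?_singleton, Option.some.injEq] at hl
    subst hl
    exact ⟨c, by rw [liftFrom]; simp⟩
  | cons ψ1 rest ih =>
    intro ψ0 c ψl hl
    rw [List.getLast?_cons_cons] at hl
    by_cases h : validc G v c ψ1
    · obtain ⟨c', hc'⟩ := ih ψ1 c ψl hl
      refine ⟨c', ?_⟩
      rw [liftFrom, if_pos h]
      obtain ⟨tl, htl⟩ := liftFrom_cons (G := G) c ψ1 rest
      rw [htl] at hc' ⊢
      rw [List.getLast?_cons_cons]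
      exact hc'
    · obtain ⟨c', hc'⟩ := ih ψ1 (chooseColor G v ψ0 ψ1 rest) ψl hl
      refine ⟨c', ?_⟩
      rw [liftFrom, if_neg h]
      obtain ⟨tl, htl⟩ := liftFrom_cons (G := G) (chooseColor G v ψ0 ψ1 rest) ψ1 rest
      rw [htl] at hc' ⊢
      rw [List.getLast?_cons_cons, List.getLast?_cons_cons]
      exact hc'

lemma liftFrom_count_ne :
    ∀ (r : List ({x : V // x ≠ v} → Fin 5)) (ψ0 : {x : V // x ≠ v} → Fin 5) (c : Fin 5)
    (x : {x : V // x ≠ v}),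
    recolorCount (liftFrom G v c (ψ0 :: r)) x.1 ≤ recolorCount (ψ0 :: r) x := by
  classical
  intro r
  induction r with
  | nil => intro ψ0 c x; rw [liftFrom]; simp
  | cons ψ1 rest ih =>
    intro ψ0 c x
    rw [recolorCount_cons_cons]
    by_cases h : validc G v c ψ1
    · rw [liftFrom, if_pos h]
      obtain ⟨tl, htl⟩ := liftFrom_cons (G := G) c ψ1 rest
      rw [htl, recolorCount_cons_cons, ← htl]
      have := ih ψ1 c x
      rw [extc_ne, extc_ne]
      gcongr
    · rw [liftFrom, if_neg h]
      set c' := chooseColor G v ψ0 ψ1 rest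
      obtain ⟨tl, htl⟩ := liftFrom_cons (G := G) c' ψ1 rest
      rw [recolorCount_cons_cons, htl, recolorCount_cons_cons, ← htl]
      have := ih ψ1 c' x
      rw [extc_ne, extc_ne, extc_ne]
      have h0 : (if ψ0 x ≠ ψ0 x then (1:ℕ) else 0) = 0 := by simp
      rw [h0, Nat.zero_add]
      exact Nat.add_le_add_left this _

lemma evCount_le_sum :
    ∀ (r : List ({x : V // x ≠ v} → Fin 5)) (ψ0 : {x : V // x ≠ v} → Fin 5),
    evCount G v (ψ0 :: r) ≤ ∑ u ∈ NBv G v, recolorCount (ψ0 :: r) u := by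
  classical
  intro r
  induction r with
  | nil => intro ψ0; rw [evCount]; simp
  | cons ψ1 rest ih =>
    intro ψ0
    rw [evCount]
    have hsum : ∑ u ∈ NBv G v, recolorCount (ψ0 :: ψ1 :: rest) u =
        (∑ u ∈ NBv G v, if ψ0 u ≠ ψ1 u then 1 else 0) +
        ∑ u ∈ NBv G v, recolorCount (ψ1 :: rest) u := by
      rw [← Finset.sum_add_distrib]
      exact Finset.sum_congr rfl fun u _ => recolorCount_cons_cons ψ0 ψ1 rest u
    rw [hsum]
    by_cases h : ∀ u ∈ NBv G v, ψ0 u = ψ1 u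
    · rw [if_pos h]
      exact Nat.add_le_add (Nat.zero_le _) (ih ψ1)
    · rw [if_neg h]
      push_neg at h
      obtain ⟨u, hu, hne⟩ := h
      have h1 : 1 ≤ ∑ u ∈ NBv G v, if ψ0 u ≠ ψ1 u then 1 else 0 := by
        have : (if ψ0 u ≠ ψ1 u then 1 else 0) = 1 := by simp [hne]
        calc 1 = (if ψ0 u ≠ ψ1 u then 1 else 0) := this.symm
          _ ≤ _ := Finset.single_le_sum
            (f := fun u => if ψ0 u ≠ ψ1 u then (1:ℕ) else 0)
            (fun i _ => Nat.zero_le _) hu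
      exact Nat.add_le_add h1 (ih ψ1)

end Lemmas4

section Lemmas5
set_option linter.unusedSectionVars false

variable {V : Type} [Fintype V] [DecidableEq V] {G : SimpleGraph V} {v : V}

lemma liftFrom_count_v (hdeg : Nat.card {u : V // G.Adj v u} ≤ 2) :
    ∀ (r : List ({x : V // x ≠ v} → Fin 5)) (ψ0 : {x : V // x ≠ v} → Fin 5) (c : Fin 5),
    (ψ0 :: r).Chain' RecolorStep → validc G v c ψ0 →
    recolorCount (liftFrom G v c (ψ0 :: r)) v ≤ (evCount G v (ψ0 :: r) + 1) / 2 ∧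
    (safe1 G v c (ψ0 :: r) →
      recolorCount (liftFrom G v c (ψ0 :: r)) v ≤ evCount G v (ψ0 :: r) / 2) := by
  classical
  intro r
  induction r with
  | nil =>
    intro ψ0 c _ _
    rw [liftFrom]
    simp [evCount]
  | cons ψ1 rest ih =>
    intro ψ0 c hch hc
    have hst : RecolorStep ψ0 ψ1 := (List.isChain_cons_cons.1 hch).1
    have hch2 : (ψ1 :: rest).Chain' RecolorStep := (List.isChain_cons_cons.1 hch).2
    rw [evCount]
    by_cases h : validc G v c ψ1
    · -- no recoloring of v at this step
      obtain ⟨tl, htl⟩ := liftFrom_cons (G := G) c ψ1 rest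
      have hcnt : recolorCount (liftFrom G v c (ψ0 :: ψ1 :: rest)) v =
          recolorCount (liftFrom G v c (ψ1 :: rest)) v := by
        rw [liftFrom, if_pos h, htl, recolorCount_cons_cons, ← htl]
        simp
      rw [hcnt]
      obtain ⟨IH1, IH2⟩ := ih ψ1 c hch2 h
      constructor
      · refine le_trans IH1 (Nat.div_le_div_right ?_)
        omega
      · intro hs
        by_cases hE : ∀ u ∈ NBv G v, ψ0 u = ψ1 u
        · rw [if_pos hE]
          simp only [Nat.zero_add]
          apply IH2
          unfold safe1 at hs ⊢
          rwa [tgt, if_pos hE] at hs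
        · rw [if_neg hE]
          exact le_trans IH1 (Nat.div_le_div_right (by omega))
    · -- forced recoloring of v
      obtain ⟨hc0, hc1, hsafe⟩ := chooseColor_spec hdeg hch
      set c' := chooseColor G v ψ0 ψ1 rest with hc'def
      have hne : c ≠ c' := fun he => h (he ▸ hc1)
      have hE : ¬ ∀ u ∈ NBv G v, ψ0 u = ψ1 u := by
        intro hE
        apply h
        intro u hu
        rw [← hE u hu]
        exact hc u hu
      rw [if_neg hE]
      obtain ⟨tl, htl⟩ := liftFrom_cons (G := G) c' ψ1 rest
      have hcnt : recolorCount (liftFrom G v c (ψ0 :: ψ1 :: rest)) v =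
          1 + recolorCount (liftFrom G v c' (ψ1 :: rest)) v := by
        rw [liftFrom, if_neg h, recolorCount_cons_cons, htl, recolorCount_cons_cons, ← htl]
        simp [← hc'def, hne]
      rw [hcnt]
      have IH2 := (ih ψ1 c' hch2 hc1).2 hsafe
      constructor
      · omega
      · intro hs
        exfalso
        apply h
        unfold safe1 at hs
        rw [tgt, if_neg hE] at hs
        intro u hu he
        exact hs (Finset.mem_image.2 ⟨u, hu, he⟩)

end Lemmas5

section Lemmas6
set_option linter.unusedSectionVars false

variable {V : Type} [Fintype V] [DecidableEq V]

lemma recolorCount_concat {k : ℕ} :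
    ∀ (l : List (V → Fin k)) (b : V → Fin k), l.getLast? = some b →
    ∀ (a : V → Fin k) (x : V),
    recolorCount (l ++ [a]) x = recolorCount l x + (if b x ≠ a x then 1 else 0) := by
  intro l
  induction l with
  | nil => intro b hb; simp at hb
  | cons ψ0 l ih =>
    intro b hb a x
    cases l with
    | nil =>
      simp only [List.getLast?_singleton, Option.some.injEq] at hb
      subst hb
      rw [List.singleton_append, recolorCount_cons_cons]
      simp [Nat.add_comm]
    | cons ψ1 l' =>
      rw [List.getLast?_cons_cons] at hb
      have : (ψ0 :: ψ1 :: l') ++ [a] = ψ0 :: ((ψ1 :: l') ++ [a]) := rfl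
      rw [this]
      have h2 : (ψ1 :: l') ++ [a] = ψ1 :: (l' ++ [a]) := rfl
      rw [h2, recolorCount_cons_cons, ← h2, ih b hb a x, recolorCount_cons_cons]
      omega

end Lemmas6


/-- Let `v` be a vertex of degree at most 2 in `G` and let
`φA`, `φB` be proper 5-colorings of `G`. If the restrictions of `φA` and `φB`
to `G − v` can be linked by a recoloring sequence in which every vertex is
recolored at most `t` times, then `φA` and `φB` can be linked by a recoloring
sequence in `G` in which every vertex other than `v` is recolored at most `t`
times and `v` is recolored at most `t + 1` times. -/
theorem extend_recoloring_deg2 {V : Type} [Fintype V] [DecidableEq V]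
    (G : SimpleGraph V) (v : V)
    (hdeg : Nat.card {u : V // G.Adj v u} ≤ 2)
    (φA φB : V → Fin 5)
    (hA : IsProperColoring G 5 φA) (hB : IsProperColoring G 5 φB)
    (t : ℕ)
    (h : ∃ L : List ({x : V // x ≠ v} → Fin 5),
      RecolorSeq (G.induce {x : V | x ≠ v}) 5 L ∧
      L.head? = some (fun x => φA x.1) ∧
      L.getLast? = some (fun x => φB x.1) ∧
      ∀ x : {x : V // x ≠ v}, recolorCount L x ≤ t) :
    ∃ L : List (V → Fin 5),
      RecolorSeq G 5 L ∧
      L.head? = some φA ∧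
      L.getLast? = some φB ∧
      (∀ x : V, x ≠ v → recolorCount L x ≤ t) ∧
      recolorCount L v ≤ t + 1 := by
    classical
  obtain ⟨L, ⟨hLprop, hLchain⟩, hhead, hlast, hcount⟩ := h
  cases L with
  | nil => simp at hhead
  | cons ψ0 r =>
  have hψ0 : ψ0 = fun x => φA x.1 := by
    simpa using hhead
  subst hψ0
  set ψ0 : {x : V // x ≠ v} → Fin 5 := fun x => φA x.1 with hψ0def
  have hvalid : validc G v (φA v) ψ0 := by
    intro u hu
    simp only [NBv, Finset.mem_filter] at hu
    exact fun he => (hA v u.1 hu.2) he.symm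
  set lf := liftFrom G v (φA v) (ψ0 :: r) with hlf
  obtain ⟨tl, htl⟩ := liftFrom_cons (G := G) (φA v) ψ0 r
  have hlf2 : lf = extc v ψ0 (φA v) :: tl := htl
  have hextA : extc v ψ0 (φA v) = φA := extc_restrict φA
  have hlfhead : lf.head? = some φA := by
    rw [hlf2, hextA]
    rfl
  obtain ⟨c', hc'⟩ := liftFrom_getLast (G := G) r ψ0 (φA v) (fun x => φB x.1) hlast
  have hlfprop : ∀ φ ∈ lf, IsProperColoring G 5 φ :=
    liftFrom_proper hdeg r ψ0 (φA v) hLchain hLprop hvalid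
  have hlfchain : lf.Chain' RecolorStep :=
    liftFrom_chain hdeg r ψ0 (φA v) hLchain hvalid
  -- counts
  have hcntne : ∀ x : V, x ≠ v → recolorCount lf x ≤ t := by
    intro x hx
    exact le_trans (liftFrom_count_ne (G := G) r ψ0 (φA v) ⟨x, hx⟩) (hcount ⟨x, hx⟩)
  have hev : evCount G v (ψ0 :: r) ≤ 2 * t := by
    refine le_trans (evCount_le_sum r ψ0) ?_
    calc ∑ u ∈ NBv G v, recolorCount (ψ0 :: r) u ≤ (NBv G v).card * t := by
          rw [← smul_eq_mul]
          exact Finset.sum_le_card_nsmul _ _ t (fun u _ => hcount u)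
      _ ≤ 2 * t := Nat.mul_le_mul_right t (card_NBv hdeg)
  have hcntv : recolorCount lf v ≤ t := by
    refine le_trans (liftFrom_count_v hdeg r ψ0 (φA v) hLchain hvalid).1 ?_
    omega
  by_cases hfin : c' = φB v
  · subst hfin
    refine ⟨lf, ⟨hlfprop, hlfchain⟩, hlfhead, ?_, hcntne, le_trans hcntv (by omega)⟩
    rw [hc', extc_restrict]
  · refine ⟨lf ++ [φB], ⟨?_, ?_⟩, ?_, ?_, ?_, ?_⟩
    · intro φ hφ
      rcases List.mem_append.1 hφ with hφ | hφ
      · exact hlfprop φ hφ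
      · simp only [List.mem_singleton] at hφ; subst hφ; exact hB
    · rw [List.Chain', List.isChain_append]
      refine ⟨hlfchain, List.isChain_singleton _, ?_⟩
      intro x hx y hy
      simp only [List.head?_cons, Option.mem_def, Option.some.injEq] at hy
      subst hy
      rw [hc'] at hx
      simp only [Option.mem_def, Option.some.injEq] at hx
      subst hx
      have hstep := recolorStep_v (v := v) (ψ := fun x => φB x.1) hfin
      rwa [extc_restrict φB] at hstep
    · rw [hlf2, hextA]
      rfl
    · rw [List.getLast?_concat]
    · intro x hx
      rw [recolorCount_concat lf _ hc' φB x]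
      have : extc v (fun x => φB x.1) c' x = φB x := extc_ne _ _ ⟨x, hx⟩
      rw [this]
      simp only [ne_eq, not_true_eq_false, ite_false]
      simpa using hcntne x hx
    · rw [recolorCount_concat lf _ hc' φB v]
      have : extc v (fun x => φB x.1) c' v = c' := extc_v _ _
      rw [this]
      have h1 : (if c' ≠ φB v then 1 else 0) ≤ 1 := by split <;> omega
      omega
end
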